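/- Let M be a matroid on ground set E. Define a 2-matroid Z(M) on carrier U = {ė, ē : e ∈ E} with skew classes ω_e = {ė, ē}, and rank r(Ȧ ∪ B̄) = r_M(A) + r_{M*}(B) for disjoint A, B ⊆ E, where M* is the dual matroid. Then Z(M) is a multimatroid (i.e., r satisfies axioms R1 and R2), its bases are exactly the transversals Ḃ ∪ (E−B)‾ for B a basis of M, and its circuits are exactly the sets Ċ for C a circuit of M together with the sets C̄ for C a cocircuit of M. -/

import Mathlib

open Finset

variable {U ι : Type}

section Defs
variable [DecidableEq U] [Fintype U] [DecidableEq ι] [Fintype ι]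

/-- `S` is a subtransversal: it meets each skew class at most once.
Skew classes are the fibers of `cls : U → ι`. -/
def Subtransversal (cls : U → ι) (S : Finset U) : Prop :=
  Set.InjOn cls ↑S

/-- The skew class with index `i`, as a finset. -/
def skewClass (cls : U → ι) (i : ι) : Finset U :=
  Finset.univ.filter (fun x => cls x = i)

/-- `T` is a transversal: it meets each skew class exactly once. -/
def Transversal (cls : U → ι) (T : Finset U) : Prop :=
  Subtransversal cls T ∧ ∀ i : ι, ∃ x ∈ T, cls x = i

/-- The multimatroid rank axioms for a rank function `r` on the carrier given by
`cls : U → ι` (whose fibers, assumed nonempty, are the skew classes).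
The first three fields express axiom (R1) (each transversal carries a matroid),
and `axiomR2` is axiom (R2). -/
structure IsMultimatroid (cls : U → ι) (r : Finset U → ℕ) : Prop where
  cls_surj : Function.Surjective cls
  rank_le_card : ∀ S, Subtransversal cls S → r S ≤ S.card
  mono : ∀ S T, Subtransversal cls T → S ⊆ T → r S ≤ r T
  submod : ∀ S T, Subtransversal cls (S ∪ T) → r (S ∪ T) + r (S ∩ T) ≤ r S + r T
  axiomR2 : ∀ S, ∀ x y : U, Subtransversal cls S → cls x = cls y → x ≠ y →
    (∀ u ∈ S, cls u ≠ cls x) →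
    2 * r S + 1 ≤ r (insert x S) + r (insert y S)

/-- An independent set of the multimatroid. -/
def Indep (cls : U → ι) (r : Finset U → ℕ) (S : Finset U) : Prop :=
  Subtransversal cls S ∧ r S = S.card

/-- A basis: a maximal independent subtransversal. -/
def MMBasis (cls : U → ι) (r : Finset U → ℕ) (B : Finset U) : Prop :=
  Indep cls r B ∧ ∀ S, Indep cls r S → B ⊆ S → S = B

/-- A circuit: a minimal dependent subtransversal. -/
def Circuit (cls : U → ι) (r : Finset U → ℕ) (C : Finset U) : Prop :=
  Subtransversal cls C ∧ r C < C.card ∧ ∀ D ⊂ C, ¬ r D < D.card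

/-- Non-degenerate: every skew class has at least two elements. -/
def Nondegenerate (cls : U → ι) : Prop :=
  ∀ i : ι, 2 ≤ (skewClass cls i).card

/-- An element is singular if its singleton has rank `0`. -/
def Singular (r : Finset U → ℕ) (e : U) : Prop := r {e} = 0

end Defs

section Order
variable [DecidableEq U] [Fintype U] [DecidableEq ι] [Fintype ι] [LinearOrder ι]

/-- The skew class `i` is active with respect to the transversal `T` (in
particular, with respect to a basis): there is a circuit `C` with
`C − ω_i ⊆ T` whose `≺`-least element lies in the class `i`. -/
def Active (cls : U → ι) (r : Finset U → ℕ) (T : Finset U) (i : ι) : Prop :=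
  ∃ C, Circuit cls r C ∧ C \ skewClass cls i ⊆ T ∧
    ∃ m ∈ C, cls m = i ∧ ∀ x ∈ C, i ≤ cls x

end Order

variable {α : Type} [DecidableEq α] [Fintype α]

/-- Matroid rank axioms on the ground set given by the whole finite type `α`. -/
structure IsMatroidRank (r : Finset α → ℕ) : Prop where
  rank_le_card : ∀ S : Finset α, r S ≤ S.card
  mono : ∀ ⦃S T : Finset α⦄, S ⊆ T → r S ≤ r T
  submod : ∀ S T : Finset α, r (S ∪ T) + r (S ∩ T) ≤ r S + r T

/-- The rank function of the dual matroid: `r*(B) = |B| − r(E) + r(E − B)`. -/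
def dualRank (r : Finset α → ℕ) (B : Finset α) : ℕ :=
  B.card + r (Finset.univ \ B) - r Finset.univ

/-- A basis of the matroid: an independent set of full rank. -/
def MBase (r : Finset α → ℕ) (B : Finset α) : Prop :=
  r B = B.card ∧ r B = r Finset.univ

/-- A circuit of the matroid: a minimal dependent set. -/
def MCircuit (r : Finset α → ℕ) (C : Finset α) : Prop :=
  r C < C.card ∧ ∀ D ⊂ C, ¬ r D < D.card

/-- The rank function of the 2-matroid `Z(M)` on `U = {ė, ē : e ∈ E}` (encoded as
`α × Bool`, with `ė = (e, true)`, `ē = (e, false)` and skew classes the fibers of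
`Prod.fst`): `r(Ȧ ∪ B̄) = r_M(A) + r_{M*}(B)`. -/
def zRank (r : Finset α → ℕ) (S : Finset (α × Bool)) : ℕ :=
  r ((S.filter (fun p => p.2 = true)).image Prod.fst)
    + dualRank r ((S.filter (fun p => p.2 = false)).image Prod.fst)

/-! Away from (R2), everything splits over the two layers of `S = Ȧ ∪ B̄`: `zRank` is the sum
of the rank `r` and the dual rank `r*`, which is again a matroid rank. Axiom (R2) at `e` says
`r(A + e) + r*(B + e) > r(A) + r*(B)` for disjoint `A, B`, which is submodularity of `r` on
`A + e` and `E − (B + e)` (union `E − B`, intersection `A`). By (R2) every basis of `Z(M)` is a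
transversal `Ḃ ∪ (E−B)‾`, which is independent iff `B` is independent and `E − B` coindependent,
i.e. iff `B` is a basis of `M`. A circuit lies in one layer: otherwise each of its two layers is a
proper, hence independent, subset, and additivity of `zRank` over the layers makes it independent. -/

namespace IsMatroidRank

variable {r : Finset α → ℕ}

omit [Fintype α] in
theorem rank_empty (hr : IsMatroidRank r) : r ∅ = 0 :=
  Nat.le_zero.mp (hr.rank_le_card ∅)

omit [Fintype α] in
theorem rank_union_le (hr : IsMatroidRank r) (S T : Finset α) : r (S ∪ T) ≤ r S + r T :=
  (Nat.le_add_right _ _).trans (hr.submod S T)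

theorem rank_univ_le (hr : IsMatroidRank r) (B : Finset α) : r univ ≤ B.card + r Bᶜ := by
  calc r univ = r (B ∪ Bᶜ) := by rw [union_compl]
    _ ≤ r B + r Bᶜ := hr.rank_union_le B Bᶜ
    _ ≤ B.card + r Bᶜ := Nat.add_le_add_right (hr.rank_le_card B) _

theorem dualRank_add_rank_univ (hr : IsMatroidRank r) (B : Finset α) :
    dualRank r B + r univ = B.card + r Bᶜ := by
  have := hr.rank_univ_le B
  rw [dualRank, ← compl_eq_univ_sdiff]
  omega

theorem dualRank_compl_eq_card_iff (hr : IsMatroidRank r) (B : Finset α) :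
    dualRank r Bᶜ = Bᶜ.card ↔ r B = r univ := by
  have := hr.dualRank_add_rank_univ Bᶜ
  have := hr.mono (subset_univ B)
  rw [compl_compl] at *
  omega

protected theorem dualRank (hr : IsMatroidRank r) : IsMatroidRank (dualRank r) where
  rank_le_card S := by
    have := hr.dualRank_add_rank_univ S
    have := hr.mono (subset_univ Sᶜ)
    omega
  mono S T hST := by
    have hS := hr.dualRank_add_rank_univ S
    have hT := hr.dualRank_add_rank_univ T
    have hcompl : Sᶜ ⊆ Tᶜ ∪ (T \ S) := fun x hx => by
      by_cases hxT : x ∈ T <;> simp_all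
    have := (hr.mono hcompl).trans ((hr.rank_union_le _ _).trans
      (Nat.add_le_add_left (hr.rank_le_card (T \ S)) _))
    have := card_sdiff_add_card_eq_card hST
    omega
  submod S T := by
    have := hr.dualRank_add_rank_univ S
    have := hr.dualRank_add_rank_univ T
    have := hr.dualRank_add_rank_univ (S ∪ T)
    have := hr.dualRank_add_rank_univ (S ∩ T)
    have := hr.submod Sᶜ Tᶜ
    have := card_union_add_card_inter S T
    rw [compl_union, compl_inter] at *
    omega

theorem rank_add_dualRank_lt_insert (hr : IsMatroidRank r) {A B : Finset α} {a : α}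
    (hAB : Disjoint A B) (haA : a ∉ A) (haB : a ∉ B) :
    r A + dualRank r B < r (insert a A) + dualRank r (insert a B) := by
  have hunion : insert a A ∪ (insert a B)ᶜ = Bᶜ := by
    ext x
    by_cases hxa : x = a
    · simp [hxa, haB]
    · have : x ∈ A → x ∉ B := fun h => disjoint_left.mp hAB h
      simp only [mem_union, mem_insert, mem_compl, hxa, false_or]
      tauto
  have hinter : insert a A ∩ (insert a B)ᶜ = A := by
    ext x
    by_cases hxa : x = a
    · simp [hxa, haA]
    · have : x ∈ A → x ∉ B := fun h => disjoint_left.mp hAB h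
      simp only [mem_inter, mem_insert, mem_compl, hxa, false_or]
      tauto
  have := hr.submod (insert a A) (insert a B)ᶜ
  have := hr.dualRank_add_rank_univ B
  have := hr.dualRank_add_rank_univ (insert a B)
  have := card_insert_of_notMem haB
  rw [hunion, hinter] at *
  omega

end IsMatroidRank

section Multimatroid

variable {cls : U → ι} {ρ : Finset U → ℕ}

theorem Subtransversal.insert [DecidableEq U] {S : Finset U} (hS : Subtransversal cls S) {x : U}
    (hx : ∀ u ∈ S, cls u ≠ cls x) : Subtransversal cls (insert x S) := by
  unfold Subtransversal
  rw [coe_insert, Set.injOn_insert fun hxS => hx x hxS rfl]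
  exact ⟨hS, fun ⟨u, hu, hux⟩ => hx u hu hux⟩

theorem Transversal.eq_of_subset {T S : Finset U} (hT : Transversal cls T)
    (hS : Subtransversal cls S) (hTS : T ⊆ S) : S = T := by
  refine (Finset.Subset.antisymm hTS fun s hs => ?_).symm
  obtain ⟨t, ht, hts⟩ := hT.2 (cls s)
  rwa [hS (mem_coe.2 (hTS ht)) (mem_coe.2 hs) hts] at ht

-- If `B` missed the skew pair `{x, y}`, axiom (R2) would make `B + x` or `B + y` independent.
theorem IsMultimatroid.exists_mem_mmBasis [DecidableEq U] (hM : IsMultimatroid cls ρ)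
    {B : Finset U} (hB : MMBasis cls ρ B) {x y : U} (hxy : cls x = cls y) (hne : x ≠ y) :
    ∃ u ∈ B, cls u = cls x := by
  by_contra! hnew
  have hsmall : ∀ z, (∀ u ∈ B, cls u ≠ cls z) → ρ (insert z B) ≤ B.card := by
    intro z hz
    have hzB : z ∉ B := fun h => hz z h rfl
    have hle := hM.rank_le_card _ (hB.1.1.insert hz)
    rw [card_insert_of_notMem hzB] at hle
    refine Nat.le_of_lt_succ (lt_of_le_of_ne hle fun hρ => hzB ?_)
    have hindep : Indep cls ρ (insert z B) :=
      ⟨hB.1.1.insert hz, by rw [hρ, card_insert_of_notMem hzB]⟩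
    exact hB.2 _ hindep (subset_insert z B) ▸ mem_insert_self z B
  have := hM.axiomR2 B x y hB.1.1 hxy hne hnew
  have := hsmall x hnew
  have := hsmall y (hxy ▸ hnew)
  have := hB.1.2
  omega

theorem IsMultimatroid.mmBasis_iff [DecidableEq U] [Fintype U] [DecidableEq ι]
    (hM : IsMultimatroid cls ρ) (hnd : Nondegenerate cls) {B : Finset U} :
    MMBasis cls ρ B ↔ Indep cls ρ B ∧ Transversal cls B := by
  refine ⟨fun hB => ⟨hB.1, hB.1.1, fun i => ?_⟩, fun ⟨hind, hT⟩ =>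
    ⟨hind, fun S hS hBS => hT.eq_of_subset hS.1 hBS⟩⟩
  obtain ⟨x, y, hx, hy, hne⟩ := one_lt_card_iff.mp (hnd i)
  simp only [skewClass, mem_filter, mem_univ, true_and] at hx hy
  obtain ⟨u, hu, hux⟩ := hM.exists_mem_mmBasis hB (hx.trans hy.symm) hne
  exact ⟨u, hu, hux.trans hx⟩

theorem circuit_image_iff {β : Type} [DecidableEq U] {f : β → U}
    (hf : Function.Injective f) {C : Finset β} (hC : Subtransversal cls (C.image f)) :
    Circuit cls ρ (C.image f) ↔ MCircuit (fun A => ρ (A.image f)) C := by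
  simp only [Circuit, MCircuit, hC, true_and, card_image_of_injective _ hf]
  refine and_congr_right' ⟨fun h D hD => ?_, fun h D hD => ?_⟩
  · simpa [card_image_of_injective _ hf] using h _ ((image_ssubset_image hf).mpr hD)
  · obtain ⟨D, -, rfl⟩ := subset_image_iff.mp hD.subset
    rw [card_image_of_injective _ hf]
    exact h D ((image_ssubset_image hf).mp hD)

end Multimatroid

section Layers

omit [Fintype α]

/-- `layer true S` and `layer false S` are the sets `A` and `B` in the decomposition
`S = Ȧ ∪ B̄`. -/
def layer (b : Bool) (S : Finset (α × Bool)) : Finset α :=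
  (S.filter (fun p => p.2 = b)).image Prod.fst

@[simp]
theorem mem_layer {b : Bool} {S : Finset (α × Bool)} {a : α} : a ∈ layer b S ↔ (a, b) ∈ S := by
  simp [layer]

theorem image_layer_union_image_layer (S : Finset (α × Bool)) :
    (layer true S).image (·, true) ∪ (layer false S).image (·, false) = S := by
  ext ⟨a, b⟩
  cases b <;> simp

theorem card_layer_add_card_layer (S : Finset (α × Bool)) :
    (layer true S).card + (layer false S).card = S.card := by
  conv_rhs => rw [← image_layer_union_image_layer S]
  rw [card_union_of_disjoint (by simp [disjoint_left]),
    card_image_of_injective _ (Prod.mk_left_injective true),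
    card_image_of_injective _ (Prod.mk_left_injective false)]

theorem subtransversal_fst_iff {S : Finset (α × Bool)} :
    Subtransversal Prod.fst S ↔ Disjoint (layer true S) (layer false S) := by
  simp only [Subtransversal, Set.InjOn, disjoint_left, mem_layer, mem_coe, Prod.forall]
  refine ⟨fun h a ht hf => ?_, fun h a b hab c d hcd hac => ?_⟩
  · exact Bool.noConfusion (Prod.ext_iff.mp (h a true ht a false hf rfl)).2
  · subst hac
    cases b <;> cases d
    exacts [rfl, absurd hab (h hcd), absurd hcd (h hab), rfl]

theorem layer_mono {b : Bool} {S T : Finset (α × Bool)} (h : S ⊆ T) : layer b S ⊆ layer b T :=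
  fun _ ha => mem_layer.mpr (h (mem_layer.mp ha))

theorem layer_union (b : Bool) (S T : Finset (α × Bool)) :
    layer b (S ∪ T) = layer b S ∪ layer b T := by
  ext; simp

theorem layer_inter (b : Bool) (S T : Finset (α × Bool)) :
    layer b (S ∩ T) = layer b S ∩ layer b T := by
  ext; simp

theorem layer_insert_self (a : α) (b : Bool) (S : Finset (α × Bool)) :
    layer b (insert (a, b) S) = insert a (layer b S) := by
  ext; simp

theorem layer_insert_of_ne (a : α) {b c : Bool} (hbc : b ≠ c) (S : Finset (α × Bool)) :
    layer b (insert (a, c) S) = layer b S := by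
  ext; simp [hbc]

theorem layer_image_self (b : Bool) (C : Finset α) : layer b (C.image (·, b)) = C := by
  ext; simp

theorem layer_image_of_ne {b c : Bool} (hbc : b ≠ c) (C : Finset α) :
    layer b (C.image (·, c)) = ∅ := by
  ext; simp [hbc.symm]

theorem subtransversal_image_fst (b : Bool) (C : Finset α) :
    Subtransversal Prod.fst (C.image (·, b)) :=
  subtransversal_fst_iff.mpr (by cases b <;> simp [disjoint_left])

theorem image_layer_ssubset {b : Bool} {S : Finset (α × Bool)} (h : (layer (!b) S).Nonempty) :
    (layer b S).image (·, b) ⊂ S := by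
  obtain ⟨a, ha⟩ := h
  have hsub : (layer b S).image (·, b) ⊆ S := fun p hp => by
    obtain ⟨x, hx, rfl⟩ := mem_image.mp hp
    exact mem_layer.mp hx
  exact (ssubset_iff_of_subset hsub).mpr ⟨(a, !b), mem_layer.mp ha, by simp⟩

end Layers

theorem transversal_fst_iff {S : Finset (α × Bool)} :
    Transversal Prod.fst S ↔ ∃ B : Finset α, S = B.image (·, true) ∪ Bᶜ.image (·, false) := by
  constructor
  · rintro ⟨hsub, hcover⟩
    refine ⟨layer true S, ?_⟩
    simp only [subtransversal_fst_iff, disjoint_left, mem_layer] at hsub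
    have hcompl : ∀ a, (a, false) ∈ S ↔ (a, true) ∉ S := fun a => by
      refine ⟨fun hf ht => hsub ht hf, fun ht => ?_⟩
      obtain ⟨⟨_, c⟩, hc, rfl⟩ := hcover a
      cases c
      exacts [hc, absurd hc ht]
    ext ⟨a, b⟩
    cases b <;> simp [hcompl]
  · rintro ⟨B, rfl⟩
    refine ⟨subtransversal_fst_iff.mpr ?_, fun a => ?_⟩
    · simp [disjoint_left]
    · by_cases ha : a ∈ B
      exacts [⟨(a, true), by simp [ha]⟩, ⟨(a, false), by simp [ha]⟩]

theorem zRank_eq (r : Finset α → ℕ) (S : Finset (α × Bool)) :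
    zRank r S = r (layer true S) + dualRank r (layer false S) := rfl

section ZMatroid

variable {r : Finset α → ℕ}

theorem zRank_le_card (hr : IsMatroidRank r) (S : Finset (α × Bool)) : zRank r S ≤ S.card :=
  (card_layer_add_card_layer S) ▸
    Nat.add_le_add (hr.rank_le_card _) (hr.dualRank.rank_le_card _)

theorem zRank_mono (hr : IsMatroidRank r) {S T : Finset (α × Bool)} (h : S ⊆ T) :
    zRank r S ≤ zRank r T :=
  Nat.add_le_add (hr.mono (layer_mono h)) (hr.dualRank.mono (layer_mono h))

theorem zRank_submod (hr : IsMatroidRank r) (S T : Finset (α × Bool)) :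
    zRank r (S ∪ T) + zRank r (S ∩ T) ≤ zRank r S + zRank r T := by
  have := hr.submod (layer true S) (layer true T)
  have := hr.dualRank.submod (layer false S) (layer false T)
  simp only [zRank_eq, layer_union, layer_inter]
  omega

theorem zRank_insert_add_zRank_insert (hr : IsMatroidRank r) {S : Finset (α × Bool)}
    (hS : Subtransversal Prod.fst S) {a : α} (ha : ∀ u ∈ S, u.1 ≠ a) :
    2 * zRank r S + 1 ≤ zRank r (insert (a, true) S) + zRank r (insert (a, false) S) := by
  have := hr.rank_add_dualRank_lt_insert (subtransversal_fst_iff.mp hS)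
    (fun h => ha _ (mem_layer.mp h) rfl) (fun h => ha _ (mem_layer.mp h) rfl)
  simp only [zRank_eq, layer_insert_self, layer_insert_of_ne a (by decide : true ≠ false),
    layer_insert_of_ne a (by decide : false ≠ true)]
  omega

theorem isMultimatroid_zRank (hr : IsMatroidRank r) :
    IsMultimatroid (Prod.fst : α × Bool → α) (zRank r) where
  cls_surj a := ⟨(a, true), rfl⟩
  rank_le_card S _ := zRank_le_card hr S
  mono _ _ _ h := zRank_mono hr h
  submod S T _ := zRank_submod hr S T
  axiomR2 := by
    rintro S ⟨a, b⟩ ⟨a', c⟩ hS (rfl : a = a') hne ha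
    have := zRank_insert_add_zRank_insert hr hS (a := a) ha
    cases b <;> cases c <;> first | exact absurd rfl hne | omega

theorem nondegenerate_fst : Nondegenerate (Prod.fst : α × Bool → α) := fun a =>
  one_lt_card_iff.mpr ⟨(a, true), (a, false), by simp [skewClass], by simp [skewClass], by simp⟩

theorem zRank_image_union_compl_eq_card_iff (hr : IsMatroidRank r) (B : Finset α) :
    zRank r (B.image (·, true) ∪ Bᶜ.image (·, false)) =
      (B.image (·, true) ∪ Bᶜ.image (·, false)).card ↔ MBase r B := by
  have hT : layer true (B.image (·, true) ∪ Bᶜ.image (·, false)) = B := by ext; simp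
  have hF : layer false (B.image (·, true) ∪ Bᶜ.image (·, false)) = Bᶜ := by ext; simp
  rw [zRank_eq, ← card_layer_add_card_layer, hT, hF, MBase, ← hr.dualRank_compl_eq_card_iff]
  have := hr.rank_le_card B
  have := hr.dualRank.rank_le_card Bᶜ
  omega

theorem mmBasis_zRank_iff (hr : IsMatroidRank r) (S : Finset (α × Bool)) :
    MMBasis (Prod.fst : α × Bool → α) (zRank r) S ↔
      ∃ B : Finset α, MBase r B ∧ S = B.image (·, true) ∪ Bᶜ.image (·, false) := by
  rw [(isMultimatroid_zRank hr).mmBasis_iff nondegenerate_fst]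
  constructor
  · rintro ⟨⟨-, hrank⟩, htr⟩
    obtain ⟨B, rfl⟩ := transversal_fst_iff.mp htr
    exact ⟨B, (zRank_image_union_compl_eq_card_iff hr B).mp hrank, rfl⟩
  · rintro ⟨B, hB, rfl⟩
    have htr := transversal_fst_iff.mpr ⟨B, rfl⟩
    exact ⟨⟨htr.1, (zRank_image_union_compl_eq_card_iff hr B).mpr hB⟩, htr⟩

theorem zRank_image_true (hr : IsMatroidRank r) (C : Finset α) :
    zRank r (C.image (·, true)) = r C := by
  simp [zRank_eq, layer_image_self, layer_image_of_ne, hr.dualRank.rank_empty]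

theorem zRank_image_false (hr : IsMatroidRank r) (C : Finset α) :
    zRank r (C.image (·, false)) = dualRank r C := by
  simp [zRank_eq, layer_image_self, layer_image_of_ne, hr.rank_empty]

theorem circuit_zRank_image_true_iff (hr : IsMatroidRank r) {C : Finset α} :
    Circuit Prod.fst (zRank r) (C.image (·, true)) ↔ MCircuit r C := by
  rw [circuit_image_iff (Prod.mk_left_injective true) (subtransversal_image_fst true C),
    funext (zRank_image_true hr)]

theorem circuit_zRank_image_false_iff (hr : IsMatroidRank r) {C : Finset α} :
    Circuit Prod.fst (zRank r) (C.image (·, false)) ↔ MCircuit (dualRank r) C := by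
  rw [circuit_image_iff (Prod.mk_left_injective false) (subtransversal_image_fst false C),
    funext (zRank_image_false hr)]

theorem layer_eq_empty_of_circuit (hr : IsMatroidRank r) {S : Finset (α × Bool)}
    (hS : Circuit Prod.fst (zRank r) S) : layer true S = ∅ ∨ layer false S = ∅ := by
  by_contra! h
  have hT := hS.2.2 _ (image_layer_ssubset (b := true) h.2)
  have hF := hS.2.2 _ (image_layer_ssubset (b := false) h.1)
  rw [zRank_image_true hr, card_image_of_injective _ (Prod.mk_left_injective true)] at hT
  rw [zRank_image_false hr, card_image_of_injective _ (Prod.mk_left_injective false)] at hF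
  have := hS.2.1
  rw [zRank_eq, ← card_layer_add_card_layer] at this
  omega

theorem circuit_zRank_iff (hr : IsMatroidRank r) (S : Finset (α × Bool)) :
    Circuit Prod.fst (zRank r) S ↔
      (∃ C : Finset α, MCircuit r C ∧ S = C.image (·, true)) ∨
        (∃ C : Finset α, MCircuit (dualRank r) C ∧ S = C.image (·, false)) := by
  constructor
  · intro hS
    rcases layer_eq_empty_of_circuit hr hS with h | h
    · have hS' : S = (layer false S).image (·, false) := by
        simpa [h] using (image_layer_union_image_layer S).symm
      rw [hS'] at hS
      exact Or.inr ⟨_, circuit_zRank_image_false_iff hr |>.mp hS, hS'⟩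
    · have hS' : S = (layer true S).image (·, true) := by
        simpa [h] using (image_layer_union_image_layer S).symm
      rw [hS'] at hS
      exact Or.inl ⟨_, circuit_zRank_image_true_iff hr |>.mp hS, hS'⟩
  · rintro (⟨C, hC, rfl⟩ | ⟨C, hC, rfl⟩)
    exacts [circuit_zRank_image_true_iff hr |>.mpr hC, circuit_zRank_image_false_iff hr |>.mpr hC]

end ZMatroid

/-- `Z(M)` is a multimatroid; its bases are exactly the transversals
`Ḃ ∪ (E−B)‾` for `B` a basis of `M`; its circuits are exactly the sets `Ċ` for `C`
a circuit of `M` together with the sets `C̄` for `C` a cocircuit of `M`. -/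
theorem stmt_19 (r : Finset α → ℕ) (hr : IsMatroidRank r) :
    IsMultimatroid (Prod.fst : α × Bool → α) (zRank r) ∧
    (∀ B2 : Finset (α × Bool), MMBasis (Prod.fst : α × Bool → α) (zRank r) B2 ↔
      ∃ B : Finset α, MBase r B ∧
        B2 = B.image (fun e => (e, true)) ∪ Bᶜ.image (fun e => (e, false))) ∧
    (∀ C2 : Finset (α × Bool), Circuit (Prod.fst : α × Bool → α) (zRank r) C2 ↔
      ((∃ C : Finset α, MCircuit r C ∧ C2 = C.image (fun e => (e, true))) ∨
        (∃ C : Finset α, MCircuit (dualRank r) C ∧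
          C2 = C.image (fun e => (e, false))))) :=
  ⟨isMultimatroid_zRank hr, mmBasis_zRank_iff hr, circuit_zRank_iff hr⟩
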